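/- For all n ≥ 3, the poset of pointed Lyndon forests FLyn_n^• and Reiner's poset of rooted spanning forests SF_n are not isomorphic as posets. -/

import Mathlib

open Finset

open scoped BigOperators Classical

/-! ## Generic machinery for edge labelings of posets presented by cover relations -/

section Chains

variable {α : Type*} {L : Type*}

/-- The word of labels read along a list of poset elements. -/
def wordOf (lab : α → α → L) : List α → List L
  | x :: y :: rest => lab x y :: wordOf lab (y :: rest)
  | _ => []

/-- `c` is a saturated chain from `x` to `y` with respect to the cover relation `cov`;
in a graded poset these are exactly the maximal chains of the interval `[x, y]`. -/
def IsSatChain (cov : α → α → Prop) (x y : α) (c : List α) : Prop :=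
  c.Chain' cov ∧ c.head? = some x ∧ c.getLast? = some y

/-- A word of labels is increasing if consecutive labels strictly increase. -/
def IncWord (lt : L → L → Prop) (w : List L) : Prop := w.Chain' lt

/-- A word of labels is ascent-free if no consecutive pair of labels strictly increases. -/
def AscFree (lt : L → L → Prop) (w : List L) : Prop := w.Chain' fun a b => ¬ lt a b

/-- The partial order generated by a cover relation. -/
def leOf (cov : α → α → Prop) : α → α → Prop := Relation.ReflTransGen cov

/-- The strict order generated by a cover relation. -/
def ltOf (cov : α → α → Prop) (a b : α) : Prop := leOf cov a b ∧ a ≠ b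

/-- An ER-labeling: every closed interval has a unique increasing maximal chain. -/
def IsERLabeling (cov : α → α → Prop) (lab : α → α → L) (lt : L → L → Prop) : Prop :=
  ∀ x y, leOf cov x y → ∃! c, IsSatChain cov x y c ∧ IncWord lt (wordOf lab c)

/-- The rank two switching property: in every rank-two interval whose increasing chain
has word of labels `ab`, there is a unique chain with word of labels `ba`. -/
def RankTwoSwitch (cov : α → α → Prop) (lab : α → α → L) (lt : L → L → Prop) : Prop :=
  ∀ x y c a b, IsSatChain cov x y c → IncWord lt (wordOf lab c) → wordOf lab c = [a, b] →
    ∃! c', IsSatChain cov x y c' ∧ wordOf lab c' = [b, a]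

/-- In every interval, distinct ascent-free maximal chains have distinct label words. -/
def AscFreeInj (cov : α → α → Prop) (lab : α → α → L) (lt : L → L → Prop) : Prop :=
  ∀ x y c c', IsSatChain cov x y c → IsSatChain cov x y c' →
    AscFree lt (wordOf lab c) → AscFree lt (wordOf lab c') →
    wordOf lab c = wordOf lab c' → c = c'

/-- An EW-labeling. -/
def IsEWLabeling (cov : α → α → Prop) (lab : α → α → L) (lt : L → L → Prop) : Prop :=
  IsERLabeling cov lab lt ∧ RankTwoSwitch cov lab lt ∧ AscFreeInj cov lab lt

/-- An EL-labeling: every closed interval has a unique increasing maximal chain,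
which lexicographically precedes every other maximal chain of the interval. -/
def IsELLabeling (cov : α → α → Prop) (lab : α → α → L) (lt : L → L → Prop) : Prop :=
  ∀ x y, leOf cov x y →
    ∃ c, (IsSatChain cov x y c ∧ IncWord lt (wordOf lab c)) ∧
      ∀ c', IsSatChain cov x y c' → c' ≠ c →
        ¬ IncWord lt (wordOf lab c') ∧ List.Lex lt (wordOf lab c) (wordOf lab c')

end Chains

/-! ## Möbius functions and Whitney numbers -/

section Whitney

variable {α : Type*} {β : Type*}

/-- Auxiliary Möbius function computed with fuel; for an element of rank `k` of a
graded poset, fuel `k` computes the one-variable Möbius function `μ(0̂, ·)`. -/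
noncomputable def muAux (ltr : α → α → Prop) (bot : α) : ℕ → α → ℤ
  | 0, x => if x = bot then 1 else 0
  | k + 1, x => if x = bot then 1 else - ∑ᶠ (y : α) (_ : ltr y x), muAux ltr bot k y

/-- The one-variable Möbius function `μ(0̂, x)` of a graded poset presented by its
cover relation `cov`, minimum `bot` and rank function `rk`. -/
noncomputable def muBot (cov : α → α → Prop) (bot : α) (rk : α → ℕ) (x : α) : ℤ :=
  muAux (ltOf cov) bot (rk x) x

/-- The `k`-th Whitney number of the first kind. -/
noncomputable def whitney1 (cov : α → α → Prop) (bot : α) (rk : α → ℕ) (k : ℕ) : ℤ :=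
  ∑ᶠ (x : α) (_ : rk x = k), muBot cov bot rk x

/-- The `k`-th Whitney number of the second kind. -/
noncomputable def whitney2 (rk : α → ℕ) (k : ℕ) : ℕ :=
  Nat.card {x : α // rk x = k}

/-- Two graded posets are Whitney duals if their Whitney numbers of the first and second
kind are swapped (up to sign). -/
def IsWhitneyDual (covP : α → α → Prop) (botP : α) (rkP : α → ℕ)
    (covQ : β → β → Prop) (botQ : β) (rkQ : β → ℕ) : Prop :=
  ∀ k, (whitney1 covP botP rkP k).natAbs = whitney2 rkQ k ∧
       (whitney1 covQ botQ rkQ k).natAbs = whitney2 rkP k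

/-- Two graded posets are Whitney twins if they have the same Whitney numbers of the first
and of the second kind. -/
def IsWhitneyTwin (covP : α → α → Prop) (botP : α) (rkP : α → ℕ)
    (covQ : β → β → Prop) (botQ : β) (rkQ : β → ℕ) : Prop :=
  ∀ k, whitney1 covP botP rkP k = whitney1 covQ botQ rkQ k ∧ whitney2 rkP k = whitney2 rkQ k

/-- `(cov, bot, rk)` presents a graded poset with minimum `bot`. -/
def IsGradedPoset (cov : α → α → Prop) (bot : α) (rk : α → ℕ) : Prop :=
  (∀ x, leOf cov bot x) ∧ rk bot = 0 ∧ ∀ x y, cov x y → rk y = rk x + 1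

/-- A graded poset has a Whitney dual. -/
def HasWhitneyDual {γ : Type} (cov : γ → γ → Prop) (bot : γ) (rk : γ → ℕ) : Prop :=
  ∃ (β : Type) (_ : Finite β) (covQ : β → β → Prop) (botQ : β) (rkQ : β → ℕ),
    IsGradedPoset covQ botQ rkQ ∧ IsWhitneyDual cov bot rk covQ botQ rkQ

/-- Isomorphism of the posets generated by two cover relations. -/
def CovPosetIso (covP : α → α → Prop) (covQ : β → β → Prop) : Prop :=
  ∃ e : α ≃ β, ∀ x y, leOf covP x y ↔ leOf covQ (e x) (e y)

end Whitney

/-! ## The label posets `Λₙʷ` and `Λₙ•` (strict order relations)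

Labels are triples `(a, b, u)` with `a < b` in `[n]` and `u ∈ {0,1}` (encoded as `Bool`). -/

/-- The strict order of `Λₙʷ = Γ₁ ⊕ ⋯ ⊕ Γ_{n-1}` where `Γ_a` carries the product order
`(a,b)ᵘ ≤ (a,c)ᵛ ↔ b ≤ c ∧ u ≤ v`. -/
def ltLw (x y : ℕ × ℕ × Bool) : Prop :=
  x.1 < y.1 ∨ (x.1 = y.1 ∧ x.2.1 ≤ y.2.1 ∧ x.2.2 ≤ y.2.2 ∧ x.2 ≠ y.2)

/-- The strict order of `Λₙ• = A₁ ⊕ C₁ ⊕ ⋯ ⊕ A_{n-1} ⊕ C_{n-1}` where `A_a` is the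
antichain of the `(a,b)⁰` and `C_a` is the chain of the `(a,b)¹` ordered by `b`. -/
def ltLp (x y : ℕ × ℕ × Bool) : Prop :=
  x.1 < y.1 ∨ (x.1 = y.1 ∧
    ((x.2.2 = false ∧ y.2.2 = true) ∨ (x.2.2 = true ∧ y.2.2 = true ∧ x.2.1 < y.2.1)))

/-! ## Pointed and weighted partition posets -/

/-- The minimum of a finite set of naturals (`0` for the empty set). -/
def minB (B : Finset ℕ) : ℕ := B.min.untopD 0

/-- Pointed partitions of the ground set `A`: partitions of `A` into blocks, each block
carrying a distinguished (pointed) element.  A pointed block is a pair `(B, p)` with `p ∈ B`. -/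
abbrev PPart (A : Finset ℕ) : Type :=
  {π : Finset (Finset ℕ × ℕ) //
    (∀ b ∈ π, b.2 ∈ b.1) ∧
    (∀ b ∈ π, ∀ b' ∈ π, b ≠ b' → Disjoint b.1 b'.1) ∧
    π.biUnion Prod.fst = A}

/-- The cover relation of the pointed partition poset: merge two pointed blocks, the merged
block being pointed at the pointed element of one of the two. -/
def covPP {A : Finset ℕ} (π π' : PPart A) : Prop :=
  ∃ b1 ∈ π.1, ∃ b2 ∈ π.1, minB b1.1 < minB b2.1 ∧
    ∃ p : ℕ, (p = b1.2 ∨ p = b2.2) ∧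
      π'.1 = insert (b1.1 ∪ b2.1, p) ((π.1.erase b1).erase b2)

/-- The labeling `λ•` (as a bare label map): the cover `u`-merging blocks `A, B` with
`min A < min B` gets the label `(min A, min B, u)`, where `u = 1` exactly when the merged
block is pointed at the pointed element of `A`. -/
noncomputable def labPP {A : Finset ℕ} (π π' : PPart A) : ℕ × ℕ × Bool :=
  let olds := π.1 \ π'.1
  let mins := olds.image (fun b => minB b.1)
  (mins.min.untopD 0, mins.max.unbotD 0,
    if ∃ b ∈ olds, minB b.1 = mins.min.untopD 0 ∧ ∃ d ∈ π'.1 \ π.1, d.2 = b.2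
      then true else false)

/-- The minimum of the pointed partition poset: all blocks are pointed singletons. -/
def botPP (A : Finset ℕ) : PPart A :=
  ⟨A.image fun i => ({i}, i), by
    refine ⟨?_, ?_, ?_⟩
    · intro b hb
      obtain ⟨i, -, rfl⟩ := Finset.mem_image.1 hb
      exact Finset.mem_singleton_self i
    · intro b hb b' hb' hne
      obtain ⟨i, -, rfl⟩ := Finset.mem_image.1 hb
      obtain ⟨j, -, rfl⟩ := Finset.mem_image.1 hb'
      have hij : i ≠ j := fun h => hne (by rw [h])
      simp [Finset.disjoint_left, hij]
    · ext x
      simp⟩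

/-- The rank function of the pointed partition poset. -/
def rkPP {A : Finset ℕ} (π : PPart A) : ℕ := A.card - π.1.card

/-- Weighted partitions of the ground set `A`: partitions of `A` into blocks, each block `B`
carrying a weight `v` with `0 ≤ v ≤ |B| - 1`. -/
abbrev WPart (A : Finset ℕ) : Type :=
  {π : Finset (Finset ℕ × ℕ) //
    (∀ b ∈ π, b.2 < b.1.card) ∧
    (∀ b ∈ π, ∀ b' ∈ π, b ≠ b' → Disjoint b.1 b'.1) ∧
    π.biUnion Prod.fst = A}

/-- The cover relation of the weighted partition poset: merge blocks `A^v, B^w` into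
`(A ∪ B)^(v+w+u)` for some `u ∈ {0,1}`. -/
def covWP {A : Finset ℕ} (π π' : WPart A) : Prop :=
  ∃ b1 ∈ π.1, ∃ b2 ∈ π.1, minB b1.1 < minB b2.1 ∧ ∃ u : Bool,
    π'.1 = insert (b1.1 ∪ b2.1, b1.2 + b2.2 + (if u then 1 else 0)) ((π.1.erase b1).erase b2)

/-- The labeling `λ_w` (as a bare label map): the cover merging `A^v, B^w` with
`min A < min B` into `(A ∪ B)^(v+w+u)` gets the label `(min A, min B, u)`. -/
noncomputable def labWP {A : Finset ℕ} (π π' : WPart A) : ℕ × ℕ × Bool :=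
  let olds := π.1 \ π'.1
  let mins := olds.image (fun b => minB b.1)
  (mins.min.untopD 0, mins.max.unbotD 0,
    if (π'.1 \ π.1).sum Prod.snd = olds.sum Prod.snd + 1 then true else false)

/-- The minimum of the weighted partition poset: all blocks singletons of weight `0`. -/
def botWP (A : Finset ℕ) : WPart A :=
  ⟨A.image fun i => ({i}, 0), by
    refine ⟨?_, ?_, ?_⟩
    · intro b hb
      obtain ⟨i, -, rfl⟩ := Finset.mem_image.1 hb
      simp
    · intro b hb b' hb' hne
      obtain ⟨i, -, rfl⟩ := Finset.mem_image.1 hb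
      obtain ⟨j, -, rfl⟩ := Finset.mem_image.1 hb'
      have hij : i ≠ j := fun h => hne (by rw [h])
      simp [Finset.disjoint_left, hij]
    · ext x
      simp⟩

/-- The rank function of the weighted partition poset. -/
def rkWP {A : Finset ℕ} (π : WPart A) : ℕ := A.card - π.1.card
/-! ## Bicolored binary trees and Lyndon forests -/

/-- Planar binary trees with `ℕ`-labeled leaves and `Bool`-colored internal vertices
(`false` = color 0, `true` = color 1). -/
inductive BT : Type
  | leaf : ℕ → BT
  | node : Bool → BT → BT → BT
deriving DecidableEq

namespace BT

/-- The valency: the minimum leaf label of a tree. -/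
def nu : BT → ℕ
  | leaf a => a
  | node _ l r => min l.nu r.nu

/-- The set of leaf labels of a tree. -/
def leaves : BT → Finset ℕ
  | leaf a => {a}
  | node _ l r => l.leaves ∪ r.leaves

/-- The number of internal vertices of a tree. -/
def internals : BT → ℕ
  | leaf _ => 0
  | node _ l r => l.internals + r.internals + 1

/-- A tree is normalized if its leaf labels are distinct and every internal vertex has the
same valency as its left child. -/
def normalized : BT → Prop
  | leaf _ => True
  | node _ l r => l.normalized ∧ r.normalized ∧ Disjoint l.leaves r.leaves ∧ l.nu < r.nu

/-- The pointed Lyndon condition: at every internal vertex `v` with internal left child,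
`color (L v) ≥ color v`, and if `color (L v) = color v = 1` then `v` is a Lyndon vertex,
i.e. `ν (R (L v)) > ν (R v)`. -/
def pLyn : BT → Prop
  | leaf _ => True
  | node c l r => l.pLyn ∧ r.pLyn ∧
      (match l with
       | leaf _ => True
       | node c' _ r' => c ≤ c' ∧ ((c' = c ∧ c = true) → r.nu < r'.nu))

/-- The bicolored Lyndon condition: every internal vertex with internal left child is
Lyndon (`ν (R (L v)) > ν (R v)`) or satisfies `color (L v) > color v`. -/
def wLyn : BT → Prop
  | leaf _ => True
  | node c l r => l.wLyn ∧ r.wLyn ∧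
      (match l with
       | leaf _ => True
       | node c' _ r' => r.nu < r'.nu ∨ c < c')

/-- The pointed element of a bicolored tree: a `1`-colored vertex keeps the point of its
left subtree and a `0`-colored vertex keeps the point of its right subtree. -/
def ppt : BT → ℕ
  | leaf a => a
  | node c l r => if c then l.ppt else r.ppt

end BT

/-- `u`-merging of two pointed Lyndon trees: create a new root of color `u` with the two
trees as subtrees, then repeatedly slide the new vertex together with its right subtree
past its left child until the pointed Lyndon condition holds at the new vertex. -/
def mergeP (u : Bool) : BT → BT → BT
  | BT.leaf a, t2 => BT.node u (BT.leaf a) t2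
  | BT.node c a b, t2 =>
      if u ≤ c ∧ ((c = true ∧ u = true) → t2.nu < b.nu)
      then BT.node u (BT.node c a b) t2
      else BT.node c (mergeP u a t2) b

/-- `u`-merging of two bicolored Lyndon trees: create a new root of color `u` with the two
trees as subtrees, then repeatedly slide the new vertex together with its right subtree
past its left child until the bicolored Lyndon condition holds at the new vertex. -/
def mergeW (u : Bool) : BT → BT → BT
  | BT.leaf a, t2 => BT.node u (BT.leaf a) t2
  | BT.node c a b, t2 =>
      if t2.nu < b.nu ∨ u < c
      then BT.node u (BT.node c a b) t2
      else BT.node c (mergeW u a t2) b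

/-- A valid forest on the ground set `[n]`, each tree normalized and satisfying `P`, the
trees having pairwise disjoint leaf sets which together cover `[n] = {1, …, n}`. -/
def ForestValid (n : ℕ) (P : BT → Prop) (F : Finset BT) : Prop :=
  (∀ t ∈ F, t.normalized ∧ P t) ∧
  (∀ t ∈ F, ∀ t' ∈ F, t ≠ t' → Disjoint t.leaves t'.leaves) ∧
  F.biUnion BT.leaves = Finset.Icc 1 n

/-- The set of pointed Lyndon forests on `[n]`. -/
abbrev FLynP (n : ℕ) : Type := {F : Finset BT // ForestValid n BT.pLyn F}

/-- The set of bicolored Lyndon forests on `[n]`. -/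
abbrev FLynW (n : ℕ) : Type := {F : Finset BT // ForestValid n BT.wLyn F}

/-- The cover relation on forests: `u`-merge two of the trees (the one with smaller minimum
leaf label going to the left). -/
def covForest (merge : Bool → BT → BT → BT) (F F' : Finset BT) : Prop :=
  ∃ t1 ∈ F, ∃ t2 ∈ F, t1.nu < t2.nu ∧ ∃ u : Bool,
    F' = insert (merge u t1 t2) ((F.erase t1).erase t2)

/-- The cover relation of the poset of pointed Lyndon forests `FLyn_n^•`. -/
def covFP {n : ℕ} (F F' : FLynP n) : Prop := covForest mergeP F.1 F'.1

/-- The cover relation of the poset of bicolored Lyndon forests `FLyn_n^w`. -/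
def covFW {n : ℕ} (F F' : FLynW n) : Prop := covForest mergeW F.1 F'.1

/-- The forest of `n` isolated leaves. -/
def botForest (n : ℕ) : Finset BT := (Finset.Icc 1 n).image BT.leaf

theorem botForest_valid (n : ℕ) (P : BT → Prop) (hP : ∀ a, P (BT.leaf a)) :
    ForestValid n P (botForest n) := by
  refine ⟨?_, ?_, ?_⟩
  · intro t ht
    obtain ⟨i, -, rfl⟩ := Finset.mem_image.1 ht
    exact ⟨trivial, hP i⟩
  · intro t ht t' ht' hne
    obtain ⟨i, -, rfl⟩ := Finset.mem_image.1 ht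
    obtain ⟨j, -, rfl⟩ := Finset.mem_image.1 ht'
    have hij : i ≠ j := fun h => hne (by rw [h])
    simp only [BT.leaves]
    simp [Finset.disjoint_left, hij]
  · ext x
    simp [botForest, BT.leaves]

/-- The minimum of the poset of pointed Lyndon forests. -/
def botFP (n : ℕ) : FLynP n := ⟨botForest n, botForest_valid n _ fun _ => trivial⟩

/-- The minimum of the poset of bicolored Lyndon forests. -/
def botFW (n : ℕ) : FLynW n := ⟨botForest n, botForest_valid n _ fun _ => trivial⟩

/-- The rank of a forest: its total number of internal vertices. -/
def rkForest (F : Finset BT) : ℕ := F.sum BT.internals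

/-- The rank function of `FLyn_n^•`. -/
def rkFP {n : ℕ} (F : FLynP n) : ℕ := rkForest F.1

/-- The rank function of `FLyn_n^w`. -/
def rkFW {n : ℕ} (F : FLynW n) : ℕ := rkForest F.1

/-! ## The Whitney dual construction `R_λ(P)` -/

section RPoset

variable {α : Type*} {L : Type*}

/-- Swap the leftmost ascent of a word of labels. -/
noncomputable def swapFirstAscent (lt : L → L → Prop) : List L → List L
  | a :: b :: rest => if lt a b then b :: a :: rest else a :: swapFirstAscent lt (b :: rest)
  | w => w

/-- Sort a word of labels by repeatedly swapping its leftmost ascent until it is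
ascent-free. -/
noncomputable def sortWord (lt : L → L → Prop) (w : List L) : List L :=
  (swapFirstAscent lt)^[w.length * w.length] w

/-- The underlying set of the Whitney dual `R_λ(P)`: pairs `(x, w)` where `w` is the label
word of an ascent-free saturated chain from `0̂` to `x`. -/
abbrev RPoset (cov : α → α → Prop) (lab : α → α → L) (lt : L → L → Prop) (bot : α) : Type _ :=
  {q : α × List L //
    ∃ c, IsSatChain cov bot q.1 c ∧ AscFree lt (wordOf lab c) ∧ wordOf lab c = q.2}

/-- The cover relation of `R_λ(P)`: `(x, w) ⋖ (y, u)` iff `x ⋖ y` and `u` is obtained by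
sorting the label of `x ⋖ y` into `w`. -/
def covR (cov : α → α → Prop) (lab : α → α → L) (lt : L → L → Prop) (bot : α)
    (p q : RPoset cov lab lt bot) : Prop :=
  cov p.1.1 q.1.1 ∧ q.1.2 = sortWord lt (p.1.2 ++ [lab p.1.1 q.1.1])

end RPoset

/-! ## Reiner's poset of rooted spanning forests -/

/-- A rooted spanning forest on `[n]`, encoded by its parent function: `f i` is the parent
of the vertex `i` (`f i = i` for roots), vertices outside `[n]` being fixed, and every
vertex reaching a root after finitely many steps (acyclicity). -/
def SFvalid (n : ℕ) (f : ℕ → ℕ) : Prop :=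
  (∀ i ∈ Finset.Icc 1 n, f i ∈ Finset.Icc 1 n) ∧
  (∀ i, i ∉ Finset.Icc 1 n → f i = i) ∧
  (∀ i, ∃ k, f^[k + 1] i = f^[k] i)

/-- Reiner's poset `SF_n` of rooted spanning forests of the complete graph on `[n]`. -/
abbrev SF (n : ℕ) : Type := {f : ℕ → ℕ // SFvalid n f}

/-- The cover relation of `SF_n`: add an edge between the roots of two trees, one of the
two roots becoming the root of the merged tree. -/
def covSF {n : ℕ} (f g : SF n) : Prop :=
  ∃ r1 ∈ Finset.Icc 1 n, ∃ r2 ∈ Finset.Icc 1 n, r1 ≠ r2 ∧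
    f.1 r1 = r1 ∧ f.1 r2 = r2 ∧
    (g.1 = Function.update f.1 r1 r2 ∨ g.1 = Function.update f.1 r2 r1)

/-- The rank of a rooted spanning forest: its number of edges. -/
def rkSF {n : ℕ} (f : SF n) : ℕ := ((Finset.Icc 1 n).filter fun i => f.1 i ≠ i).card
/-! ## Further constructions used in particular statements -/

/-- The map `Φ` on underlying finsets: a pointed block `(B, q)` of a pointed partition
above `α` is sent to the set of minima of the `α`-blocks contained in `B`, pointed at the
minimum of the `α`-block containing `q`. -/
noncomputable def PhiMap (af : Finset (Finset ℕ × ℕ)) (pf : Finset (Finset ℕ × ℕ)) :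
    Finset (Finset ℕ × ℕ) :=
  pf.image fun b =>
    ((af.filter fun c => c.1 ⊆ b.1).image fun c => minB c.1,
     ((af.filter fun c => b.2 ∈ c.1).image fun c => minB c.1).min.untopD 0)

/-- The expected word of labels of the unique increasing maximal chain of the interval
`[0̂, [n]^p]` of the pointed partition poset:
`(1,2)¹ ⋯ (1,n)¹` if `p = 1`, and `(1,p)⁰ (1,2)¹ ⋯ (1,p-1)¹ (1,p+1)¹ ⋯ (1,n)¹` otherwise. -/
def expectedWordP (n p : ℕ) : List (ℕ × ℕ × Bool) :=
  let base := (List.range (n - 1)).map fun i => ((1 : ℕ), i + 2, true)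
  if p = 1 then base else ((1 : ℕ), p, false) :: base.erase (1, p, true)

/-- Merge two words of labels, each with non-increasing first components, into a single
word with non-increasing first components. -/
def mergeByNu : List (ℕ × ℕ × Bool) → List (ℕ × ℕ × Bool) → List (ℕ × ℕ × Bool)
  | [], ys => ys
  | xs, [] => xs
  | x :: xs, y :: ys =>
      if y.1 ≤ x.1 then x :: mergeByNu xs (y :: ys) else y :: mergeByNu (x :: xs) ys
termination_by xs ys => xs.length + ys.length

/-- The word of labels of a tree read along the reverse-minimal linear extension of its
internal vertices: the internal vertex `v` contributes `(ν (L v), ν (R v), color v)`, the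
vertices being listed with non-increasing valencies (descendants first among equal
valencies). -/
def BT.rmword : BT → List (ℕ × ℕ × Bool)
  | BT.leaf _ => []
  | BT.node c l r => mergeByNu l.rmword r.rmword ++ [(l.nu, r.nu, c)]

/-- The word of labels of the saturated chain `c(F)` associated to a forest `F`, read along
the reverse-minimal linear extension of the internal vertices of `F`. -/
noncomputable def forestWord (F : Finset BT) : List (ℕ × ℕ × Bool) :=
  (F.toList.map BT.rmword).foldr mergeByNu []

/-- `TLyn_{n,p}^•`: pointed Lyndon trees on `[n]` whose associated chain ends at `[n]^p`,
i.e. whose tracked pointed element is `p`. -/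
abbrev TLynBullet (n p : ℕ) : Type :=
  {T : BT // T.normalized ∧ T.pLyn ∧ T.leaves = Finset.Icc 1 n ∧ T.ppt = p}

/-- The labeling `λ̃` of `Πₙ•` proposed by Bellier-Millès, Delcroix-Oger and Hoffbeck:
the cover `u`-merging blocks with minima `a < b` in a pointed partition `π` with `|π|`
blocks is labeled `(b, a + n - |π|)` if `u = 0` and `(b, b + n - |π|)` if `u = 1`. -/
noncomputable def labT (n : ℕ) {A : Finset ℕ} (π π' : PPart A) : ℕ × ℕ :=
  let olds := π.1 \ π'.1
  let mins := olds.image fun b => minB b.1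
  let a := mins.min.untopD 0
  let b := mins.max.unbotD 0
  if ∃ c ∈ olds, minB c.1 = a ∧ ∃ d ∈ π'.1 \ π.1, d.2 = c.2
  then (b, b + n - π.1.card)
  else (b, a + n - π.1.card)

/-- The (strict) lexicographic order on `ℕ × ℕ`. -/
def ltT (x y : ℕ × ℕ) : Prop := x.1 < y.1 ∨ (x.1 = y.1 ∧ x.2 < y.2)

/-!
Call an atom isolated if some element above it lies above no other atom; this is invariant
under poset isomorphisms. In `SFₙ` every atom is a single edge `a → b`, and it is the only
atom below the path `a → b → c`, since a lower cover cuts an edge ending at a root. In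
`FLynₙ•` the atom `A` formed by the `1`-colored cherry on `1, 2` is not isolated: an element
covering `A` either merges that cherry with a leaf `r`, and the same tree arises by merging
the cherry on `1, r` with the leaf `2`, or it adds a second cherry on `c, d`, which could
have been formed first.
-/

namespace CovPoset

variable {α β : Type*} {cov : α → α → Prop}

def IsMinOf (cov : α → α → Prop) (a : α) : Prop := ∀ b, ¬ ltOf cov b a

/-- Atoms are defined without reference to a minimum, so that they are transported by any
isomorphism. -/
def IsAtomOf (cov : α → α → Prop) (a : α) : Prop :=
  (∃ b, ltOf cov b a) ∧ ∀ b, ltOf cov b a → IsMinOf cov b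

def IsIsolatedAtom (cov : α → α → Prop) (a : α) : Prop :=
  IsAtomOf cov a ∧ ∃ x, ltOf cov a x ∧ ∀ z, IsAtomOf cov z → ltOf cov z x → z = a

section Graded

variable {rk : α → ℕ}

theorem eq_or_rank_lt_of_leOf (hrk : ∀ a b, cov a b → rk b = rk a + 1) {x y : α}
    (h : leOf cov x y) : x = y ∨ rk x < rk y := by
  induction h with
  | refl => exact Or.inl rfl
  | tail _ hcov ih =>
    have := hrk _ _ hcov
    rcases ih with rfl | hlt <;> omega

theorem rank_lt_of_ltOf (hrk : ∀ a b, cov a b → rk b = rk a + 1) {x y : α}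
    (h : ltOf cov x y) : rk x < rk y :=
  (eq_or_rank_lt_of_leOf hrk h.1).resolve_left h.2

theorem ltOf_of_cov_of_leOf (hrk : ∀ a b, cov a b → rk b = rk a + 1) {x y z : α}
    (hxy : cov x y) (hyz : leOf cov y z) : ltOf cov x z := by
  refine ⟨.head hxy hyz, fun hxz => ?_⟩
  subst hxz
  have := hrk _ _ hxy
  rcases eq_or_rank_lt_of_leOf hrk hyz with rfl | hlt <;> omega

theorem ltOf_of_cov (hrk : ∀ a b, cov a b → rk b = rk a + 1) {x y : α} (h : cov x y) :
    ltOf cov x y :=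
  ltOf_of_cov_of_leOf hrk h .refl

theorem cov_of_ltOf_of_rank_eq (hrk : ∀ a b, cov a b → rk b = rk a + 1) {x y : α}
    (h : ltOf cov x y) (hxy : rk y = rk x + 1) : cov x y := by
  obtain ⟨w, hxw, hwy⟩ := (Relation.ReflTransGen.cases_head h.1).resolve_left h.2
  rcases eq_or_rank_lt_of_leOf hrk hwy with rfl | hlt
  · exact hxw
  · have := hrk _ _ hxw
    omega

theorem isAtomOf_of_cov (hrk : ∀ a b, cov a b → rk b = rk a + 1) {a b : α} (h : cov b a)
    (hb : rk b = 0) : IsAtomOf cov a := by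
  refine ⟨⟨b, ltOf_of_cov hrk h⟩, fun c hc d hd => ?_⟩
  have := rank_lt_of_ltOf hrk hc
  have := rank_lt_of_ltOf hrk hd
  have := hrk _ _ h
  omega

theorem IsAtomOf.exists_cov (hrk : ∀ a b, cov a b → rk b = rk a + 1) {a : α}
    (ha : IsAtomOf cov a) : ∃ w, IsMinOf cov w ∧ cov w a := by
  obtain ⟨⟨b, hba⟩, hmin⟩ := ha
  obtain ⟨w, -, hwa⟩ := (Relation.ReflTransGen.cases_tail hba.1).resolve_left hba.2.symm
  exact ⟨w, hmin w (ltOf_of_cov hrk hwa), hwa⟩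

end Graded

section Iso

variable {covQ : β → β → Prop}

theorem ltOf_congr (e : α ≃ β) (he : ∀ x y, leOf cov x y ↔ leOf covQ (e x) (e y)) {x y : α} :
    ltOf covQ (e x) (e y) ↔ ltOf cov x y := by
  rw [ltOf, ltOf, he, e.injective.ne_iff]

theorem isMinOf_congr (e : α ≃ β) (he : ∀ x y, leOf cov x y ↔ leOf covQ (e x) (e y)) {a : α} :
    IsMinOf covQ (e a) ↔ IsMinOf cov a := by
  simp only [IsMinOf, ← e.forall_congr_right (q := fun b => ¬ ltOf covQ b (e a)),
    ltOf_congr e he]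

theorem isAtomOf_congr (e : α ≃ β) (he : ∀ x y, leOf cov x y ↔ leOf covQ (e x) (e y)) {a : α} :
    IsAtomOf covQ (e a) ↔ IsAtomOf cov a := by
  simp only [IsAtomOf, ← e.forall_congr_right (q := fun b => ltOf covQ b (e a) → IsMinOf covQ b),
    ← e.exists_congr_right (q := fun b => ltOf covQ b (e a)), ltOf_congr e he,
    isMinOf_congr e he]

theorem isIsolatedAtom_congr (e : α ≃ β) (he : ∀ x y, leOf cov x y ↔ leOf covQ (e x) (e y))
    {a : α} : IsIsolatedAtom covQ (e a) ↔ IsIsolatedAtom cov a := by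
  simp only [IsIsolatedAtom, ← e.exists_congr_right (q := fun x => ltOf covQ (e a) x ∧ _),
    ← e.forall_congr_right (q := fun z => IsAtomOf covQ z → ltOf covQ z _ → z = e a),
    ltOf_congr e he, isAtomOf_congr e he, e.injective.eq_iff]

end Iso

end CovPoset

open CovPoset

theorem exists_iterate_fixed_update {α : Type*} [DecidableEq α] {f : α → α}
    (hf : ∀ j, ∃ k, f^[k + 1] j = f^[k] j) {r t : α}
    (ht : ∃ m, (Function.update f r t)^[m + 1] t = (Function.update f r t)^[m] t) (j : α) :
    ∃ m, (Function.update f r t)^[m + 1] j = (Function.update f r t)^[m] j := by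
  set g := Function.update f r t
  have shift : ∀ j, (∃ m, g^[m + 1] (g j) = g^[m] (g j)) → ∃ m, g^[m + 1] j = g^[m] j :=
    fun j ⟨m, hm⟩ => ⟨m + 1, by simpa only [Function.iterate_succ_apply] using hm⟩
  have hr : ∃ m, g^[m + 1] r = g^[m] r :=
    shift r (by rwa [show g r = t from Function.update_self r t f])
  obtain ⟨k, hk⟩ := hf j
  induction k generalizing j with
  | zero =>
    rcases eq_or_ne j r with rfl | hjr
    · exact hr
    · exact ⟨0, by simpa [g, hjr] using hk⟩
  | succ k ih =>
    rcases eq_or_ne j r with rfl | hjr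
    · exact hr
    · refine shift j ?_
      rw [show g j = f j from Function.update_of_ne hjr t f]
      exact ih (f j) (by rwa [← Function.iterate_succ_apply, ← Function.iterate_succ_apply])

theorem exists_apply_fixed_of_apply_ne {α : Type*} {f : α → α} {i : α} (hi : f i ≠ i) {k : ℕ}
    (hk : f^[k + 1] i = f^[k] i) : ∃ r, f r ≠ r ∧ f (f r) = f r := by
  induction k generalizing i with
  | zero => exact absurd hk hi
  | succ k ih =>
    by_cases hfi : f (f i) = f i
    · exact ⟨i, hi, hfi⟩
    · exact ih hfi (by rwa [← Function.iterate_succ_apply, ← Function.iterate_succ_apply])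

theorem SFvalid.update {n : ℕ} {f : ℕ → ℕ} (hf : SFvalid n f) {r t : ℕ}
    (hr : r ∈ Icc 1 n) (ht : t ∈ Icc 1 n) (hfix : Function.update f r t t = t) :
    SFvalid n (Function.update f r t) := by
  refine ⟨fun j hj => ?_, fun j hj => ?_, exists_iterate_fixed_update hf.2.2 ⟨0, hfix⟩⟩
  · rcases eq_or_ne j r with rfl | hjr
    · rwa [Function.update_self]
    · rw [Function.update_of_ne hjr]
      exact hf.1 j hj
  · rw [Function.update_of_ne (ne_of_mem_of_not_mem hr hj).symm]
    exact hf.2.1 j hj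

def botSF (n : ℕ) : SF n :=
  ⟨id, fun _ hi => hi, fun _ _ => rfl, fun _ => ⟨0, rfl⟩⟩

theorem rkSF_botSF (n : ℕ) : rkSF (botSF n) = 0 := by
  simp [rkSF, botSF]

theorem rkSF_eq_of_covSF {n : ℕ} (f g : SF n) (h : covSF f g) : rkSF g = rkSF f + 1 := by
  suffices key : ∀ s t, s ∈ Icc 1 n → s ≠ t → f.1 s = s →
      g.1 = Function.update f.1 s t → rkSF g = rkSF f + 1 by
    obtain ⟨p, hp, q, hq, hpq, hfp, hfq, hg | hg⟩ := h
    · exact key p q hp hpq hfp hg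
    · exact key q p hq hpq.symm hfq hg
  intro s t hs hst hfs hg
  have hfilter : (Icc 1 n).filter (fun i => g.1 i ≠ i) =
      insert s ((Icc 1 n).filter fun i => f.1 i ≠ i) := by
    ext i
    rcases eq_or_ne i s with rfl | his
    · simp [hg, hs, hst.symm]
    · simp [hg, his]
  rw [rkSF, rkSF, hfilter, card_insert_of_notMem (by simp [hfs])]

theorem covSF_update_self {n : ℕ} (f : SF n) {r : ℕ} (hr : r ∈ Icc 1 n) (hfr : f.1 r ≠ r)
    (hffr : f.1 (f.1 r) = f.1 r) :
    covSF ⟨Function.update f.1 r r, f.2.update hr hr (Function.update_self r r f.1)⟩ f := by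
  refine ⟨r, hr, f.1 r, f.2.1 r hr, hfr.symm, Function.update_self r r f.1, ?_, Or.inl ?_⟩
  · show Function.update f.1 r r (f.1 r) = f.1 r
    rwa [Function.update_of_ne hfr]
  · rw [Function.update_idem, Function.update_eq_self]

theorem eq_botSF_of_isMinOf {n : ℕ} {f : SF n} (hf : IsMinOf covSF f) : f = botSF n := by
  by_contra hne
  obtain ⟨i, hfi⟩ : ∃ i, f.1 i ≠ i := by
    by_contra! h
    exact hne (Subtype.ext (funext h))
  obtain ⟨k, hk⟩ := f.2.2.2 i
  obtain ⟨r, hfr, hffr⟩ := exists_apply_fixed_of_apply_ne hfi hk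
  have hr : r ∈ Icc 1 n := by
    by_contra hr
    exact hfr (f.2.2.1 r hr)
  exact hf _ (ltOf_of_cov rkSF_eq_of_covSF (covSF_update_self f hr hfr hffr))

theorem covSF_botSF_of_isAtomOf {n : ℕ} {y : SF n} (hy : IsAtomOf covSF y) :
    covSF (botSF n) y := by
  obtain ⟨w, hw, hwy⟩ := hy.exists_cov rkSF_eq_of_covSF
  rwa [← eq_botSF_of_isMinOf hw]

theorem rkSF_eq_one_of_isAtomOf {n : ℕ} {y : SF n} (hy : IsAtomOf covSF y) : rkSF y = 1 := by
  rw [rkSF_eq_of_covSF _ _ (covSF_botSF_of_isAtomOf hy), rkSF_botSF]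

/-- The only edge of the path `a → b → c` that can be cut is `b → c`: cutting `a → b` would
make `b` a root while it still points to `c`. -/
theorem eq_of_update_eq_path {z : ℕ → ℕ} {a b c s t : ℕ} (hab : a ≠ b) (hbc : b ≠ c)
    (hst : s ≠ t) (hzs : z s = s) (hzt : z t = t)
    (h : Function.update z s t = Function.update (Function.update id a b) b c) :
    z = Function.update id a b := by
  funext j
  have hj := congrFun h j
  have hs := congrFun h s
  have hb := congrFun h b
  simp only [Function.update_apply, id] at hj hs hb ⊢
  grind

theorem exists_third_mem_Icc {n : ℕ} (hn : 3 ≤ n) (a b : ℕ) :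
    ∃ c ∈ Icc 1 n, c ≠ a ∧ c ≠ b := by
  by_contra! h
  have hsub : Icc 1 n ⊆ {a, b} := fun c hc => by
    rcases eq_or_ne c a with rfl | hca
    · exact mem_insert_self c _
    · exact mem_insert_of_mem (mem_singleton.2 (h c hc hca))
  have := (card_le_card hsub).trans card_le_two
  rw [Nat.card_Icc] at this
  omega

theorem isIsolatedAtom_of_isAtomOf_covSF {n : ℕ} (hn : 3 ≤ n) {y : SF n}
    (hy : IsAtomOf covSF y) : IsIsolatedAtom covSF y := by
  obtain ⟨a, ha, b, hb, hab, hy1⟩ : ∃ a ∈ Icc 1 n, ∃ b ∈ Icc 1 n, a ≠ b ∧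
      y.1 = Function.update id a b := by
    obtain ⟨p, hp, q, hq, hpq, -, -, hpq' | hqp⟩ := covSF_botSF_of_isAtomOf hy
    · exact ⟨p, hp, q, hq, hpq, hpq'⟩
    · exact ⟨q, hq, p, hp, hpq.symm, hqp⟩
  obtain ⟨c, hc, hca, hcb⟩ := exists_third_mem_Icc hn a b
  have hyb : y.1 b = b := by simp [hy1, hab.symm]
  have hyc : y.1 c = c := by simp [hy1, hca]
  let x : SF n := ⟨Function.update y.1 b c,
    y.2.update hb hc (by rw [Function.update_of_ne hcb, hyc])⟩
  have hx : x.1 = Function.update (Function.update id a b) b c :=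
    congrArg (Function.update · b c) hy1
  have hyx : covSF y x := ⟨b, hb, c, hc, hcb.symm, hyb, hyc, Or.inl rfl⟩
  refine ⟨hy, x, ltOf_of_cov rkSF_eq_of_covSF hyx, fun z hz hzx => Subtype.ext ?_⟩
  have hzx : covSF z x := cov_of_ltOf_of_rank_eq rkSF_eq_of_covSF hzx
    (by rw [rkSF_eq_of_covSF _ _ hyx, rkSF_eq_one_of_isAtomOf hz, rkSF_eq_one_of_isAtomOf hy])
  rw [hy1]
  obtain ⟨s, -, t, -, hst, hzs, hzt, hxz | hxz⟩ := hzx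
  · exact eq_of_update_eq_path hab hcb.symm hst hzs hzt (hxz ▸ hx)
  · exact eq_of_update_eq_path hab hcb.symm hst.symm hzt hzs (hxz ▸ hx)

namespace BT

theorem leaves_nonempty (t : BT) : t.leaves.Nonempty := by
  induction t with
  | leaf a => exact ⟨a, mem_singleton_self a⟩
  | node _ _ _ ihl _ => exact ihl.mono subset_union_left

theorem leaves_mergeP (u : Bool) (t₁ t₂ : BT) :
    (mergeP u t₁ t₂).leaves = t₁.leaves ∪ t₂.leaves := by
  induction t₁ with
  | leaf _ => rfl
  | node _ _ _ ih _ =>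
    rw [mergeP]
    split_ifs
    · rfl
    · simp only [leaves, ih, union_right_comm]

theorem internals_mergeP (u : Bool) (t₁ t₂ : BT) :
    (mergeP u t₁ t₂).internals = t₁.internals + t₂.internals + 1 := by
  induction t₁ with
  | leaf _ => rfl
  | node _ _ _ ih _ =>
    rw [mergeP]
    split_ifs
    · rfl
    · simp only [internals, ih]
      omega

end BT

theorem rkFP_eq_of_covFP {n : ℕ} (F F' : FLynP n) (h : covFP F F') :
    rkFP F' = rkFP F + 1 := by
  obtain ⟨t₁, ht₁, t₂, ht₂, hnu, u, hF'⟩ := h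
  have ht₂' : t₂ ∈ F.1.erase t₁ := mem_erase.2 ⟨(ne_of_lt hnu).symm ∘ congrArg BT.nu, ht₂⟩
  have hm : mergeP u t₁ t₂ ∉ (F.1.erase t₁).erase t₂ := fun hm => by
    obtain ⟨i, hi⟩ := t₁.leaves_nonempty
    refine disjoint_left.1 (F.2.2.1 _ (mem_of_mem_erase (mem_of_mem_erase hm)) t₁ ht₁
      (ne_of_mem_erase (mem_of_mem_erase hm))) ?_ hi
    rw [BT.leaves_mergeP]
    exact mem_union_left _ hi
  rw [rkFP, rkFP, rkForest, rkForest, hF', sum_insert hm, BT.internals_mergeP,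
    ← sum_erase_add _ _ ht₁, ← sum_erase_add _ _ ht₂']
  omega

theorem rkFP_botFP (n : ℕ) : rkFP (botFP n) = 0 :=
  sum_eq_zero (s := botForest n) fun t ht => by
    obtain ⟨i, -, rfl⟩ := mem_image.1 ht
    rfl

def cherryForest (n : ℕ) (u : Bool) (a b : ℕ) : Finset BT :=
  insert (.node u (.leaf a) (.leaf b)) (((botForest n).erase (.leaf a)).erase (.leaf b))

theorem mem_cherryForest {n : ℕ} {u : Bool} {a b : ℕ} {t : BT} :
    t ∈ cherryForest n u a b ↔
      t = .node u (.leaf a) (.leaf b) ∨ ∃ j ∈ Icc 1 n, j ≠ a ∧ j ≠ b ∧ t = .leaf j := by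
  simp only [cherryForest, botForest, mem_insert, mem_erase, mem_image]
  aesop

theorem cherryForest_valid {n : ℕ} (u : Bool) {a b : ℕ} (ha : a ∈ Icc 1 n)
    (hb : b ∈ Icc 1 n) (hab : a < b) : ForestValid n BT.pLyn (cherryForest n u a b) := by
  refine ⟨fun t ht => ?_, fun t ht t' ht' hne => ?_, ?_⟩
  · rcases mem_cherryForest.1 ht with rfl | ⟨j, -, -, -, rfl⟩
    · exact ⟨⟨trivial, trivial, by simp [BT.leaves, hab.ne], hab⟩, trivial, trivial, trivial⟩
    · exact ⟨trivial, trivial⟩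
  · rcases mem_cherryForest.1 ht with rfl | ⟨j, -, hja, hjb, rfl⟩ <;>
      rcases mem_cherryForest.1 ht' with rfl | ⟨j', -, hja', hjb', rfl⟩ <;>
      simp_all [BT.leaves, eq_comm]
  · ext i
    simp only [mem_biUnion, mem_cherryForest]
    constructor
    · rintro ⟨t, rfl | ⟨j, hj, -, -, rfl⟩, hi⟩
      · simp only [BT.leaves, mem_union, mem_singleton] at hi
        rcases hi with rfl | rfl <;> assumption
      · rwa [mem_singleton.1 hi]
    · intro hi
      by_cases hiab : i = a ∨ i = b
      · exact ⟨_, Or.inl rfl, by simpa [BT.leaves] using hiab⟩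
      · rw [not_or] at hiab
        exact ⟨.leaf i, Or.inr ⟨i, hi, hiab.1, hiab.2, rfl⟩, mem_singleton_self i⟩

theorem cherryForest_erase_cherry (n : ℕ) (u : Bool) (a b : ℕ) :
    (cherryForest n u a b).erase (.node u (.leaf a) (.leaf b)) =
      ((botForest n).erase (.leaf a)).erase (.leaf b) :=
  erase_insert fun h => by simp [botForest] at h

theorem insert_cherry_erase_cherryForest_comm (n : ℕ) (u v : Bool) (a b c d : ℕ) :
    insert (.node v (.leaf c) (.leaf d))
        (((cherryForest n u a b).erase (.leaf c)).erase (.leaf d)) =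
      insert (.node u (.leaf a) (.leaf b))
        (((cherryForest n v c d).erase (.leaf a)).erase (.leaf b)) := by
  ext t
  simp only [cherryForest, mem_insert, mem_erase]
  by_cases h : t = .node u (.leaf a) (.leaf b) <;>
    by_cases h' : t = .node v (.leaf c) (.leaf d) <;> simp_all; tauto

theorem mergeP_cherry_leaf_comm (u : Bool) {r : ℕ} (hr : 2 < r) :
    mergeP true (.node u (.leaf 1) (.leaf r)) (.leaf 2) =
      mergeP u (.node true (.leaf 1) (.leaf 2)) (.leaf r) := by
  cases u <;> simp [mergeP, BT.nu, hr, show ¬ r < 2 by omega]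

def cherryFP {n : ℕ} (u : Bool) {a b : ℕ} (ha : a ∈ Icc 1 n) (hb : b ∈ Icc 1 n) (hab : a < b) :
    FLynP n :=
  ⟨cherryForest n u a b, cherryForest_valid u ha hb hab⟩

section Cherry

variable {n : ℕ} {u : Bool} {a b : ℕ} (ha : a ∈ Icc 1 n) (hb : b ∈ Icc 1 n) (hab : a < b)

theorem cherryFP_val : (cherryFP u ha hb hab).1 = cherryForest n u a b :=
  rfl

theorem covFP_botFP_cherryFP : covFP (botFP n) (cherryFP u ha hb hab) :=
  ⟨.leaf a, mem_image_of_mem _ ha, .leaf b, mem_image_of_mem _ hb, hab, u, rfl⟩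

theorem isAtomOf_cherryFP : IsAtomOf covFP (cherryFP u ha hb hab) :=
  isAtomOf_of_cov rkFP_eq_of_covFP (covFP_botFP_cherryFP ha hb hab) (rkFP_botFP n)

theorem cherryFP_inj {v : Bool} {c d : ℕ} {hc : c ∈ Icc 1 n} {hd : d ∈ Icc 1 n} {hcd : c < d}
    (h : cherryFP u ha hb hab = cherryFP v hc hd hcd) : u = v ∧ a = c ∧ b = d := by
  have hmem : BT.node u (.leaf a) (.leaf b) ∈ (cherryFP v hc hd hcd).1 :=
    h ▸ mem_insert_self _ _
  rcases mem_cherryForest.1 hmem with h | ⟨j, -, -, -, h⟩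
  · simpa using h
  · exact BT.noConfusion h

end Cherry

theorem exists_atom_covFP_of_cherry_covFP {n : ℕ} (h1 : 1 ∈ Icc 1 n) (h2 : 2 ∈ Icc 1 n)
    {x : FLynP n} (hx : covFP (cherryFP true h1 h2 one_lt_two) x) :
    ∃ z, IsAtomOf covFP z ∧ z ≠ cherryFP true h1 h2 one_lt_two ∧ covFP z x := by
  obtain ⟨t₁, ht₁, t₂, ht₂, hnu, u, hx⟩ := hx
  rw [cherryFP_val] at ht₁ ht₂ hx
  rcases mem_cherryForest.1 ht₁ with rfl | ⟨c, hc, hc1, hc2, rfl⟩ <;>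
    rcases mem_cherryForest.1 ht₂ with rfl | ⟨d, hd, hd1, hd2, rfl⟩
  · exact absurd hnu (lt_irrefl _)
  · have hd3 : 2 < d := by simp at hd; omega
    refine ⟨cherryFP u h1 hd (by omega), isAtomOf_cherryFP _ _ _, fun h => ?_,
      .node u (.leaf 1) (.leaf d), mem_insert_self _ _,
      .leaf 2, mem_cherryForest.2 (Or.inr ⟨2, h2, by omega, by omega, rfl⟩),
      by simp [BT.nu], true, ?_⟩
    · have := cherryFP_inj _ _ _ h
      omega
    · rw [hx, mergeP_cherry_leaf_comm u hd3, cherryFP_val, cherryForest_erase_cherry,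
        cherryForest_erase_cherry, erase_right_comm]
  · simp [BT.nu] at hnu hc
    omega
  · refine ⟨cherryFP u hc hd hnu, isAtomOf_cherryFP _ _ _, fun h => hc1 (cherryFP_inj _ _ _ h).2.1,
      .leaf 1, mem_cherryForest.2 (Or.inr ⟨1, h1, hc1.symm, hd1.symm, rfl⟩),
      .leaf 2, mem_cherryForest.2 (Or.inr ⟨2, h2, hc2.symm, hd2.symm, rfl⟩), one_lt_two, true, ?_⟩
    rw [hx]
    exact insert_cherry_erase_cherryForest_comm n true u 1 2 c d

theorem not_isIsolatedAtom_cherryFP {n : ℕ} (h1 : 1 ∈ Icc 1 n) (h2 : 2 ∈ Icc 1 n) :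
    ¬ IsIsolatedAtom covFP (cherryFP true h1 h2 one_lt_two) := by
  rintro ⟨-, x, hAx, hx⟩
  obtain ⟨x₁, hAx₁, hx₁x⟩ := (Relation.ReflTransGen.cases_head hAx.1).resolve_left hAx.2
  obtain ⟨z, hz, hzA, hzx₁⟩ := exists_atom_covFP_of_cherry_covFP h1 h2 hAx₁
  exact hzA (hx z hz (ltOf_of_cov_of_leOf rkFP_eq_of_covFP hzx₁ hx₁x))

/-- For all `n ≥ 3`, the poset of pointed Lyndon forests `FLynₙ•` and
Reiner's poset of rooted spanning forests `SFₙ` are not isomorphic as posets. -/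
theorem FLynP_not_iso_SF (n : ℕ) (hn : 3 ≤ n) :
    ¬ CovPosetIso (covFP (n := n)) (covSF (n := n)) := by
  rintro ⟨e, he⟩
  have h1 : 1 ∈ Icc 1 n := mem_Icc.2 ⟨le_rfl, by omega⟩
  have h2 : 2 ∈ Icc 1 n := mem_Icc.2 ⟨one_le_two, by omega⟩
  have hA : IsAtomOf covSF (e (cherryFP true h1 h2 one_lt_two)) :=
    (isAtomOf_congr e he).2 (isAtomOf_cherryFP h1 h2 one_lt_two)
  exact not_isIsolatedAtom_cherryFP h1 h2
    ((isIsolatedAtom_congr e he).1 (isIsolatedAtom_of_isAtomOf_covSF hn hA))
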